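/- Algorithm 1 (the chase for unary XFDs) always terminates: for any set Σ of unary XFDs and any input XML tree T complete with respect to the set of paths of Σ, the repeated application of the chase steps of Algorithm 1 reaches, after finitely many iterations, a tree to which no further change can be made. -/

import Mathlib

/-! Common framework for strong functional dependencies in XML (XFDs).

* Labels: element labels `elem n`, attribute names `attr n`, and the text
  symbol `text` (= `S`).  The distinguished label `root` is kept implicit:
  a path `root.l₁.….l_n` is represented by the list `[l₁,…,l_n]`, so the
  path `root` itself is `[]`. -/

inductive Lab where
  | elem (n : ℕ)
  | attr (n : ℕ)
  | text
deriving DecidableEq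

/-- A path (the implicit leading label `root` is omitted). -/
abbrev XPath := List Lab

/-- `Last(p) ∈ E` (the label `root` of the root path counts as an element label). -/
def LastIsElem (p : XPath) : Prop :=
  p = [] ∨ ∃ n, p.getLast? = some (Lab.elem n)

/-- `Last(p) ∈ A`. -/
def LastIsAttr (p : XPath) : Prop :=
  ∃ n, p.getLast? = some (Lab.attr n)

/-- `meet p q` is the maximal common prefix `p ∩ q` of two paths
    (`[]`, i.e. `root`, if they diverge immediately). -/
def meet : XPath → XPath → XPath
  | a :: as, b :: bs => if a = b then a :: meet as bs else []
  | _, _ => []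

/-- Values of nodes: strings (for attribute and text nodes), node identities
    (element nodes are compared by node identity), and marked nulls
    (distinct marked nulls have distinct values). -/
inductive Val where
  | str (s : String)
  | node (v : ℕ)
  | null (v : ℕ)
deriving DecidableEq

/-- Comparison of values used by `DeleteSameAtts` (on strings it is `≤`). -/
def ValLE : Val → Val → Prop
  | Val.str a, Val.str b => a ≤ b
  | a, b => a = b

/-- An (extended) XML tree `T = (V, lab, ele, att, val, v_r)`, presented via a
    parent function.  Marked nulls are the nodes with `isNull`; a plain XML
    tree is one satisfying `NoNulls`. -/
structure XTree where
  nodes : Finset ℕ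
  root : ℕ
  root_mem : root ∈ nodes
  parent : ℕ → Option ℕ
  parent_root : parent root = none
  parent_mem : ∀ v ∈ nodes, v ≠ root → ∃ u ∈ nodes, parent v = some u
  depth : ℕ → ℕ
  depth_parent : ∀ v u, parent v = some u → depth v = depth u + 1
  lab : ℕ → Lab
  isNull : ℕ → Prop
  root_not_null : ¬ isNull root
  val : ℕ → Val
  val_root : val root = Val.node root
  val_elem : ∀ v ∈ nodes, v ≠ root → (∃ n, lab v = Lab.elem n) → ¬ isNull v →
      val v = Val.node v
  val_null : ∀ v ∈ nodes, isNull v → val v = Val.null v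
  val_str : ∀ v ∈ nodes, v ≠ root →
      (lab v = Lab.text ∨ ∃ n, lab v = Lab.attr n) → ¬ isNull v →
      ∃ s, val v = Val.str s

/-- A plain XML tree: no marked nulls. -/
def NoNulls (T : XTree) : Prop := ∀ v, ¬ T.isNull v

/-- `Chain T v p vs` : `vs` is a downward chain of nodes hanging below `v`
    whose labels spell the path `p`. -/
inductive Chain (T : XTree) : ℕ → XPath → List ℕ → Prop
  | nil (v : ℕ) : Chain T v [] []
  | cons {v : ℕ} {l : Lab} {p : XPath} {w : ℕ} {ws : List ℕ} :
      w ∈ T.nodes → T.parent w = some v → T.lab w = l → Chain T w p ws →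
      Chain T v (l :: p) (w :: ws)

/-- `vs` is (the non-root part of) a path instance over the path `p` in `T`. -/
def PathInst (T : XTree) (p : XPath) (vs : List ℕ) : Prop :=
  Chain T T.root p vs

/-- The final node of the path instance `vs` (the root for the empty instance). -/
def endNode (T : XTree) (vs : List ℕ) : ℕ :=
  (T.root :: vs).getLast (by simp)

/-- `N(p)` : the set of final nodes of path instances over `p` in `T`. -/
def Nset (T : XTree) (p : XPath) : Set ℕ :=
  {v | ∃ vs, PathInst T p vs ∧ endNode T vs = v}

/-- `Nodes(x, p)` : final nodes of path instances over `p` passing through `x`. -/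
def NodesOf (T : XTree) (x : ℕ) (p : XPath) : Set ℕ :=
  {w | ∃ vs, PathInst T p vs ∧ endNode T vs = w ∧ x ∈ T.root :: vs}

/-- The node at depth `k` on the path instance `vs` (depth `0` is the root). -/
def nodeAt (T : XTree) (vs : List ℕ) (k : ℕ) : ℕ :=
  (T.root :: vs).getD k T.root

/-- An XML functional dependency `p₁, …, p_k → q`. -/
structure XFD where
  lhs : List XPath
  rhs : XPath

/-- The final nodes of two distinct path instances of the r.h.s. trigger the
    XFD condition: one of them is a null, or their values differ. -/
def PairTriggers (T : XTree) (a b : ℕ) : Prop :=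
  T.isNull a ∨ T.isNull b ∨ T.val a ≠ T.val b

/-- The condition required of a single l.h.s. path `p` towards the XFD `… → q`
    for the two path instances `vs`, `vs'` of `q`:  with `x`/`y` the unique
    nodes of the instances lying in `N(p ∩ q)`, if `Last(p) ∈ E` then `x ≠ y`,
    and otherwise no null lies in `Nodes(x,p)` or `Nodes(y,p)` and
    `val(Nodes(x,p)) ∩ val(Nodes(y,p)) = ∅`. -/
def SatOne (T : XTree) (p q : XPath) (vs vs' : List ℕ) : Prop :=
  (LastIsElem p ∧
    nodeAt T vs (meet p q).length ≠ nodeAt T vs' (meet p q).length) ∨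
  (¬ LastIsElem p ∧
    (∀ w ∈ NodesOf T (nodeAt T vs (meet p q).length) p, ¬ T.isNull w) ∧
    (∀ w ∈ NodesOf T (nodeAt T vs' (meet p q).length) p, ¬ T.isNull w) ∧
    (∀ a ∈ NodesOf T (nodeAt T vs (meet p q).length) p,
      ∀ b ∈ NodesOf T (nodeAt T vs' (meet p q).length) p, T.val a ≠ T.val b))

/-- Strong satisfaction of an XFD in a complete (extended) XML tree. -/
def Satisfies (T : XTree) (σ : XFD) : Prop :=
  (∃ p ∈ σ.lhs, p = σ.rhs) ∨
  ∀ vs vs', PathInst T σ.rhs vs → PathInst T σ.rhs vs' → vs ≠ vs' →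
    PairTriggers T (endNode T vs) (endNode T vs') →
    ∃ p ∈ σ.lhs, SatOne T p σ.rhs vs vs'

/-- `(T, P)` is consistent. -/
def Consistent (T : XTree) (P : Set XPath) : Prop :=
  (∀ p ∈ P, ∀ q ∈ P, ∀ i : Fin p.length,
      q.getLast? = some (p.get i) → q = p.take (i.1 + 1)) ∧
  (∀ v2 ∈ T.nodes, ∀ v1, T.parent v2 = some v1 →
    ∃ p ∈ P, ∃ j : Fin p.length, p.get j = T.lab v2 ∧
      (v1 = T.root ∨ ∃ i : Fin p.length, i.1 < j.1 ∧ p.get i = T.lab v1))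

/-- `TP` is a minimal extension `T_P` of `T` with respect to the set of paths
    `P` : it extends `T` by marked nulls only, every node whose label occurs
    in a path `p ∈ P` lies on a (complete) path instance over `p`, and every
    added null lies on a path instance over some `p ∈ P`. -/
structure IsMinExt (T : XTree) (P : Set XPath) (TP : XTree) : Prop where
  nodes_subset : ∀ v ∈ T.nodes, v ∈ TP.nodes
  root_eq : TP.root = T.root
  old_not_null : ∀ v ∈ T.nodes, ¬ TP.isNull v
  new_null : ∀ v ∈ TP.nodes, v ∉ T.nodes → TP.isNull v
  parent_eq : ∀ v ∈ T.nodes, TP.parent v = T.parent v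
  lab_eq : ∀ v ∈ T.nodes, TP.lab v = T.lab v
  val_eq : ∀ v ∈ T.nodes, TP.val v = T.val v
  complete : ∀ v ∈ TP.nodes, v ≠ TP.root → ∀ p ∈ P, TP.lab v ∈ p →
      ∃ vs, PathInst TP p vs ∧ v ∈ vs
  minimal : ∀ v ∈ TP.nodes, v ∉ T.nodes → ∃ p ∈ P, ∃ vs, PathInst TP p vs ∧ v ∈ vs

/-- `T` is complete w.r.t. `P` : `(T, P)` is consistent and `T = T_P`. -/
def CompleteWrt (T : XTree) (P : Set XPath) : Prop :=
  Consistent T P ∧ IsMinExt T P T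

/-- Derivability of an XFD from a set of XFDs using axioms A1–A8. -/
inductive Derives (Sg : Set XFD) : XFD → Prop
  | mem {σ : XFD} : σ ∈ Sg → Derives Sg σ
  | A1 {ps : List XPath} {p : XPath} : p ∈ ps → Derives Sg ⟨ps, p⟩
  | A2 {ps : List XPath} {q p : XPath} :
      Derives Sg ⟨ps, q⟩ → Derives Sg ⟨p :: ps, q⟩
  | A3 {ps : List XPath} {q s : XPath} :
      Derives Sg ⟨ps, q⟩ → Derives Sg ⟨[q], s⟩ → Derives Sg ⟨ps, s⟩
  | A4 {ps : List XPath} {q p : XPath} :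
      Derives Sg ⟨ps, q⟩ → (∀ pi ∈ ps, meet pi q = []) → Derives Sg ⟨[p], q⟩
  | A5 {p q p' : XPath} :
      Derives Sg ⟨[p], q⟩ → meet p q <+: p' → (p' <+: p ∨ p' <+: q) →
      Derives Sg ⟨[p'], q⟩
  | A6 {p q : XPath} : LastIsElem p → q <+: p → Derives Sg ⟨[p], q⟩
  | A7 {q : XPath} : LastIsAttr q → Derives Sg ⟨[q.dropLast], q⟩
  | A8 {p : XPath} : Derives Sg ⟨[p], []⟩

/-- A set of unary XFDs `r → s` is represented as a set of pairs `(r, s)`;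
    this turns it into a set of `XFD`s. -/
def toXFDs (Sg : Set (XPath × XPath)) : Set XFD :=
  {σ : XFD | ∃ rs ∈ Sg, σ = ⟨[rs.1], rs.2⟩}

/-- `P_Σ` : the set of paths appearing on either side of an XFD in `Σ`. -/
def PathsOf (Sg : Set (XPath × XPath)) : Set XPath :=
  {t | ∃ u, (t, u) ∈ Sg ∨ (u, t) ∈ Sg}

/-- `P⁺` as computed by Algorithm 2 on input `Σ` (unary XFDs) and a path `p`:
    the closure of `{p, root}` (together with `Anc(p)` when `Last(p) ∈ E`, and
    attribute extensions of all these) under the rules of the repeat loop. -/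
inductive PPlus (Sg : Set (XPath × XPath)) (p : XPath) : XPath → Prop
  | self : PPlus Sg p p
  | rt : PPlus Sg p []
  | anc {q : XPath} : LastIsElem p → q <+: p → q ≠ p → PPlus Sg p q
  | attSelf (a : ℕ) : PPlus Sg p (p ++ [Lab.attr a])
  | attRoot (a : ℕ) : PPlus Sg p [Lab.attr a]
  | attAnc {q : XPath} (a : ℕ) :
      LastIsElem p → q <+: p → q ≠ p → PPlus Sg p (q ++ [Lab.attr a])
  | ruleVia {r s p1 : XPath} : (r, s) ∈ Sg → PPlus Sg p p1 →
      meet r s <+: p1 → (p1 <+: r ∨ p1 <+: s) → PPlus Sg p s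
  | ruleRoot {r s : XPath} : (r, s) ∈ Sg → meet r s = [] → PPlus Sg p s
  | addAnc {r s q : XPath} : (r, s) ∈ Sg → PPlus Sg p s → LastIsElem s →
      q <+: s → q ≠ s → PPlus Sg p q
  | addAtt {r s : XPath} (a : ℕ) : (r, s) ∈ Sg → PPlus Sg p s → LastIsElem s →
      PPlus Sg p (s ++ [Lab.attr a])

/-- The set of unary XFDs `{p → q : q ∈ P⁺}`. -/
def PPlusFDs (Sg : Set (XPath × XPath)) (p : XPath) : Set (XPath × XPath) :=
  {rs | rs.1 = p ∧ PPlus Sg p rs.2}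

/-- One step of Algorithm 1 of the first kind (`Last(q) ∉ E`): choose
    `p → q ∈ Σ`, nodes `v1, v2 ∈ N(p)` with equal values and `v3, v4 ∈ N(q)`
    with `val v3 < val v4`, and set `val v4 := val v3`. -/
def ValStep (Sg : Set (XPath × XPath)) (T T' : XTree) : Prop :=
  ∃ pq ∈ Sg, ¬ LastIsElem pq.2 ∧
  ∃ v1 ∈ Nset T pq.1, ∃ v2 ∈ Nset T pq.1, T.val v1 = T.val v2 ∧
  ∃ v3 ∈ Nset T pq.2, ∃ v4 ∈ Nset T pq.2,
    (∃ s3 s4 : String, T.val v3 = Val.str s3 ∧ T.val v4 = Val.str s4 ∧ s3 < s4) ∧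
    T'.nodes = T.nodes ∧ T'.root = T.root ∧ T'.parent = T.parent ∧
    T'.lab = T.lab ∧ T'.isNull = T.isNull ∧
    T'.val = Function.update T.val v4 (T.val v3)

/-- One step of Algorithm 1 of the second kind (`Last(q) ∈ E`): choose
    `p → q ∈ Σ`, nodes `v1, v2 ∈ N(p)` with equal values and two path
    instances of `q` with distinct final nodes, agreeing exactly up to depth
    `c`; merge the second instance into the first (the merge map `φ`),
    deleting the merged nodes and (`DeleteSameAtts`) duplicate attribute
    children `A` of merged nodes, keeping for each deleted attribute node a
    twin with `ValLE`-smaller value. -/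
def MergeStep (Sg : Set (XPath × XPath)) (T T' : XTree) : Prop :=
  ∃ pq ∈ Sg, LastIsElem pq.2 ∧
  ∃ v1 ∈ Nset T pq.1, ∃ v2 ∈ Nset T pq.1, T.val v1 = T.val v2 ∧
  ∃ vs3 vs4 : List ℕ, PathInst T pq.2 vs3 ∧ PathInst T pq.2 vs4 ∧
    endNode T vs3 ≠ endNode T vs4 ∧
  ∃ c : ℕ, 0 < c ∧ c ≤ vs4.length ∧
    (T.root :: vs3).take c = (T.root :: vs4).take c ∧
    (∀ w ∈ (T.root :: vs4).drop c, w ∉ (T.root :: vs3).drop c) ∧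
  ∃ φ : ℕ → ℕ,
    (∀ i : ℕ, c ≤ i →
      ∀ (h3 : i < (T.root :: vs3).length) (h4 : i < (T.root :: vs4).length),
        φ ((T.root :: vs4).get ⟨i, h4⟩) = (T.root :: vs3).get ⟨i, h3⟩) ∧
    (∀ v, v ∉ (T.root :: vs4).drop c → φ v = v) ∧
  ∃ A : Set ℕ,
    (∀ w ∈ A, w ∈ T.nodes ∧ (∃ a, T.lab w = Lab.attr a) ∧
      w ∉ (T.root :: vs4).drop c ∧
      ∃ w', w' ∈ T.nodes ∧ w' ∉ A ∧ w' ∉ (T.root :: vs4).drop c ∧ w' ≠ w ∧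
        T.lab w' = T.lab w ∧
        Option.map φ (T.parent w') = Option.map φ (T.parent w) ∧
        ValLE (T.val w') (T.val w)) ∧
    (∀ v : ℕ, v ∈ T'.nodes ↔
        (v ∈ T.nodes ∧ v ∉ (T.root :: vs4).drop c ∧ v ∉ A)) ∧
    T'.root = T.root ∧
    (∀ v ∈ T'.nodes, T'.parent v = Option.map φ (T.parent v)) ∧
    (∀ v ∈ T'.nodes, T'.lab v = T.lab v) ∧
    (∀ v ∈ T'.nodes, T'.val v = T.val v) ∧
    (∀ v ∈ T'.nodes, (T'.isNull v ↔ T.isNull v)) ∧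
    (∀ w ∈ T'.nodes, ∀ w' ∈ T'.nodes, (∃ a, T.lab w = Lab.attr a) →
      T.lab w' = T.lab w →
      Option.map φ (T.parent w') = Option.map φ (T.parent w) → w' = w)

/-- A single step of Algorithm 1 (the chase). -/
def ChaseStep (Sg : Set (XPath × XPath)) (T T' : XTree) : Prop :=
  ValStep Sg T T' ∨ MergeStep Sg T T'

/-- `Tb` is an output of Algorithm 1 on input `Σ` and `T`: reachable from `T`
    by chase steps, with no further step applicable. -/
def ChaseResult (Sg : Set (XPath × XPath)) (T Tb : XTree) : Prop :=
  Relation.ReflTransGen (ChaseStep Sg) T Tb ∧ ∀ T'', ¬ ChaseStep Sg Tb T''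

/-- `T` contains exactly two (distinct) path instances over `q`. -/
def ExactlyTwoInsts (T : XTree) (q : XPath) : Prop :=
  ∃ vs1 vs2, vs1 ≠ vs2 ∧ PathInst T q vs1 ∧ PathInst T q vs2 ∧
    ∀ vs, PathInst T q vs → vs = vs1 ∨ vs = vs2

/-- `T` contains exactly one path instance over `q`. -/
def ExactlyOneInst (T : XTree) (q : XPath) : Prop :=
  ∃ vs, PathInst T q vs ∧ ∀ vs', PathInst T q vs' → vs' = vs

/-- The tree `T₀` used in Case 1 (`Last(p) ∉ E`): complete w.r.t. `P_Σ`,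
    with exactly two path instances of every path of `P_Σ` other than `root`,
    the two final nodes of the instances of `p` having equal values and the
    final nodes of the two instances of every other path having distinct
    values. -/
def IsT0 (Sg : Set (XPath × XPath)) (p : XPath) (T : XTree) : Prop :=
  NoNulls T ∧ CompleteWrt T (PathsOf Sg) ∧
  (∀ q ∈ PathsOf Sg, q ≠ [] → ExactlyTwoInsts T q) ∧
  (∀ vs1 vs2, PathInst T p vs1 → PathInst T p vs2 →
      T.val (endNode T vs1) = T.val (endNode T vs2)) ∧
  (∀ q ∈ PathsOf Sg, q ≠ p → ∀ vs1 vs2, PathInst T q vs1 → PathInst T q vs2 →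
      vs1 ≠ vs2 → T.val (endNode T vs1) ≠ T.val (endNode T vs2))

/-- The tree `T₁` used in Case 2 (`Last(p) ∈ E`): complete w.r.t. `P_Σ`, with
    exactly one path instance of `p`, of each prefix of `p` and of each
    attribute path (in `P_Σ`) whose parent is a prefix of `p`, exactly two
    path instances of every other path of `P_Σ`, and all node values
    distinct. -/
def IsT1 (Sg : Set (XPath × XPath)) (p : XPath) (T : XTree) : Prop :=
  NoNulls T ∧ CompleteWrt T (PathsOf Sg) ∧
  (∀ q : XPath, q <+: p → ExactlyOneInst T q) ∧
  (∀ q ∈ PathsOf Sg, LastIsAttr q → q.dropLast <+: p → ExactlyOneInst T q) ∧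
  (∀ q ∈ PathsOf Sg, q ≠ [] →
      ¬ (q <+: p ∨ (LastIsAttr q ∧ q.dropLast <+: p)) → ExactlyTwoInsts T q) ∧
  (∀ v ∈ T.nodes, ∀ w ∈ T.nodes, T.val v = T.val w → v = w)

private lemma chain_mem_nodes {T : XTree} {v : ℕ} {p : XPath} {vs : List ℕ}
    (h : Chain T v p vs) : ∀ w ∈ vs, w ∈ T.nodes := by
  induction h with
  | nil => simp
  | cons hmem hpar hlab _ ih =>
      intro w hw
      rcases List.mem_cons.mp hw with rfl | hw
      · exact hmem
      · exact ih w hw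

private lemma endNode_mem {T : XTree} {p : XPath} {vs : List ℕ}
    (h : PathInst T p vs) : endNode T vs ∈ T.nodes := by
  cases vs with
  | nil => simpa [endNode] using T.root_mem
  | cons a as =>
      have h1 : endNode T (a :: as) = (a :: as).getLast (by simp) := by
        simp [endNode, List.getLast_cons]
      rw [h1]
      exact chain_mem_nodes h _ (List.getLast_mem _)

private lemma nset_mem {T : XTree} {p : XPath} {v : ℕ} (h : v ∈ Nset T p) :
    v ∈ T.nodes := by
  obtain ⟨vs, hvs, rfl⟩ := h
  exact endNode_mem hvs

private lemma merge_card {Sg : Set (XPath × XPath)} {T T' : XTree}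
    (h : MergeStep Sg T T') : T'.nodes.card < T.nodes.card := by
  obtain ⟨pq, _, _, v1, _, v2, _, _, vs3, vs4, _, h4, _, c, hc0, hcle, _, _,
    φ, _, _, A, _, hnodes, _⟩ := h
  have hsub : T'.nodes ⊆ T.nodes := by
    intro v hv
    exact ((hnodes v).mp hv).1
  have hclen : c < (T.root :: vs4).length := by simp; omega
  have hwdrop : (T.root :: vs4)[c]'hclen ∈ (T.root :: vs4).drop c := by
    have hl : 0 < ((T.root :: vs4).drop c).length := by
      simp [List.length_drop]; omega
    have heq : ((T.root :: vs4).drop c)[0]'hl = (T.root :: vs4)[c]'hclen := by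
      simp [List.getElem_drop]
    have hmem := List.getElem_mem hl
    rwa [heq] at hmem
  have hwT : (T.root :: vs4)[c]'hclen ∈ T.nodes := by
    obtain ⟨k, rfl⟩ := Nat.exists_eq_add_of_lt hc0
    have hk : k < vs4.length := by simp at hclen; omega
    have heq2 : (T.root :: vs4)[0 + k + 1]'hclen = vs4[k]'hk := by
      simp
    rw [heq2]
    exact chain_mem_nodes h4 _ (List.getElem_mem hk)
  have hwT' : (T.root :: vs4)[c]'hclen ∉ T'.nodes := by
    intro hcon
    exact ((hnodes _).mp hcon).2.1 hwdrop
  exact Finset.card_lt_card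
    (Finset.ssubset_iff_of_subset hsub |>.mpr ⟨_, hwT, hwT'⟩)

private def vltB : Val → Val → Bool
  | Val.str a, Val.str b => decide (a < b)
  | _, _ => false

private def rkVal (S0 : Finset Val) (x : Val) : ℕ :=
  (S0.filter (fun y => vltB y x = true)).card

private def msr (S0 : Finset Val) (N : Finset ℕ) (g : ℕ → Val) : ℕ :=
  ∑ v ∈ N, rkVal S0 (g v)

private lemma valstep_nodes {Sg : Set (XPath × XPath)} {T T' : XTree}
    (h : ValStep Sg T T') : T'.nodes = T.nodes := by
  obtain ⟨pq, _, _, v1, _, v2, _, _, v3, _, v4, _, _, hn, _⟩ := h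
  exact hn

private lemma valstep_lt {Sg : Set (XPath × XPath)} {T T' : XTree}
    (h : ValStep Sg T T') (S0 : Finset Val) (hS : ∀ v ∈ T.nodes, T.val v ∈ S0) :
    (∀ v ∈ T.nodes, T'.val v ∈ S0) ∧
    msr S0 T.nodes T'.val < msr S0 T.nodes T.val := by
  obtain ⟨pq, _, _, v1, _, v2, _, _, v3, h3, v4, h4,
    ⟨s3, s4, hv3, hv4, hlt⟩, _, _, _, _, _, hval⟩ := h
  have hm3 : v3 ∈ T.nodes := nset_mem h3
  have hm4 : v4 ∈ T.nodes := nset_mem h4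
  have hS3 : Val.str s3 ∈ S0 := hv3 ▸ hS v3 hm3
  have hrk : rkVal S0 (Val.str s3) < rkVal S0 (Val.str s4) := by
    apply Finset.card_lt_card
    rw [Finset.ssubset_iff_of_subset]
    · refine ⟨Val.str s3, ?_, ?_⟩
      · simp only [Finset.mem_filter, vltB, decide_eq_true_eq]
        exact Finset.mem_filter.mpr ⟨hS3, decide_eq_true hlt⟩
      · exact fun hmem => lt_irrefl s3 (of_decide_eq_true (Finset.mem_filter.mp hmem).2)
    · intro y hy
      rw [Finset.mem_filter] at hy ⊢
      refine ⟨hy.1, ?_⟩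
      rcases y with s | n | n
      · simp only [vltB, decide_eq_true_eq] at hy ⊢
        exact lt_trans hy.2 hlt
      · simpa [vltB] using hy.2
      · simpa [vltB] using hy.2
  constructor
  · intro v hv
    rw [hval, Function.update_apply]
    split
    · exact hv3 ▸ hS v3 hm3
    · exact hS v hv
  · rw [hval]
    unfold msr
    have hcomp : (fun v => rkVal S0 (Function.update T.val v4 (T.val v3) v)) =
        Function.update (fun v => rkVal S0 (T.val v)) v4 (rkVal S0 (T.val v3)) := by
      funext v
      by_cases hv : v = v4 <;> simp [hv, Function.update_apply]
    calc ∑ v ∈ T.nodes, rkVal S0 (Function.update T.val v4 (T.val v3) v)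
        = ∑ v ∈ T.nodes, Function.update (fun v => rkVal S0 (T.val v)) v4
            (rkVal S0 (T.val v3)) v := by rw [hcomp]
      _ = rkVal S0 (T.val v3) + ∑ v ∈ T.nodes \ {v4}, rkVal S0 (T.val v) :=
            Finset.sum_update_of_mem hm4 _ _
      _ < rkVal S0 (T.val v4) + ∑ v ∈ T.nodes \ {v4}, rkVal S0 (T.val v) := by
            rw [hv3, hv4]; omega
      _ = ∑ v ∈ T.nodes, rkVal S0 (T.val v) := by
            rw [Finset.sdiff_singleton_eq_erase]
            exact Finset.add_sum_erase _ (fun v => rkVal S0 (T.val v)) hm4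

/-- **Algorithm 1 always terminates.**
For any set `Σ` of unary XFDs and any input tree `T` complete with respect to
the set `P_Σ` of paths of `Σ`, there is no infinite sequence of chase steps of
Algorithm 1 starting from `T`. -/
theorem chase_terminates (Sg : Set (XPath × XPath)) (T : XTree)
    (hT : CompleteWrt T (PathsOf Sg)) :
    ¬ ∃ f : ℕ → XTree, f 0 = T ∧ ∀ n, ChaseStep Sg (f n) (f (n + 1)) := by
  rintro ⟨f, hf0, hstep⟩
  set g : ℕ → ℕ := fun n => (f n).nodes.card with hg
  have hdec : ∀ n, g (n + 1) ≤ g n := by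
    intro n
    rcases hstep n with h | h
    · simp [hg, valstep_nodes h]
    · exact le_of_lt (merge_card h)
  have hmono : ∀ m n, m ≤ n → g n ≤ g m := by
    intro m n hmn
    induction n with
    | zero => simp at hmn; simp [hmn]
    | succ k ih =>
        rcases Nat.lt_or_ge m (k + 1) with h | h
        · exact le_trans (hdec k) (ih (Nat.lt_succ_iff.mp h))
        · have : m = k + 1 := le_antisymm hmn h
          simp [this]
  obtain ⟨n₀, hn₀⟩ : ∃ n₀, g n₀ = sInf (Set.range g) :=
    Nat.sInf_mem (Set.range_nonempty g)
  have hconst : ∀ n, n₀ ≤ n → g n = g n₀ := by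
    intro n hn
    refine le_antisymm (hmono _ _ hn) ?_
    rw [hn₀]
    exact Nat.sInf_le ⟨n, rfl⟩
  have hvs : ∀ n, n₀ ≤ n → ValStep Sg (f n) (f (n + 1)) := by
    intro n hn
    rcases hstep n with h | h
    · exact h
    · exfalso
      have h1 := merge_card h
      have h2 := hconst n hn
      have h3 := hconst (n + 1) (le_trans hn (Nat.le_succ n))
      simp only [hg] at h2 h3
      omega
  have hN : ∀ n, n₀ ≤ n → (f n).nodes = (f n₀).nodes := by
    intro n hn
    induction n with
    | zero => simp at hn; simp [hn]
    | succ k ih =>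
        rcases Nat.lt_or_ge n₀ (k + 1) with h | h
        · have hk : n₀ ≤ k := Nat.lt_succ_iff.mp h
          rw [valstep_nodes (hvs k hk)]
          exact ih hk
        · have : n₀ = k + 1 := le_antisymm hn h
          simp [this]
  set S0 : Finset Val := (f n₀).nodes.image (f n₀).val with hS0
  have hinv : ∀ n, n₀ ≤ n → ∀ v ∈ (f n₀).nodes, (f n).val v ∈ S0 := by
    intro n hn
    induction n with
    | zero =>
        simp at hn
        subst hn
        intro v hv
        exact Finset.mem_image_of_mem _ hv
    | succ k ih =>
        rcases Nat.lt_or_ge n₀ (k + 1) with h | h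
        · have hk : n₀ ≤ k := Nat.lt_succ_iff.mp h
          have hNk : (f k).nodes = (f n₀).nodes := hN k hk
          have := (valstep_lt (hvs k hk) S0 (by rw [hNk]; exact ih hk)).1
          rw [hNk] at this
          exact this
        · have : n₀ = k + 1 := le_antisymm hn h
          subst this
          intro v hv
          exact Finset.mem_image_of_mem _ hv
  have hlt : ∀ n, n₀ ≤ n →
      msr S0 (f n₀).nodes (f (n + 1)).val < msr S0 (f n₀).nodes (f n).val := by
    intro n hn
    have hNn : (f n).nodes = (f n₀).nodes := hN n hn
    have := (valstep_lt (hvs n hn) S0 (by rw [hNn]; exact hinv n hn)).2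
    rwa [hNn] at this
  have hdesc : ∀ k, msr S0 (f n₀).nodes (f (n₀ + k)).val + k ≤
      msr S0 (f n₀).nodes (f n₀).val := by
    intro k
    induction k with
    | zero => simp
    | succ m ih =>
        have := hlt (n₀ + m) (Nat.le_add_right _ _)
        have heq : n₀ + (m + 1) = n₀ + m + 1 := by omega
        rw [heq]
        omega
  have := hdesc (msr S0 (f n₀).nodes (f n₀).val + 1)
  omega
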